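/- For every positive integer n: v_2(Σ_{k=1}^{n} 2^k/k) ≥ (n+1) - log_2(n+1), with equality if and only if n = 2^α - 1 for some positive integer α. -/

import Mathlib

/-!
Write `S n = ∑_{k=1}^n 2^k/k`. The identity `1/C(n+1,j) + 1/C(n+1,j+1) = (n+2)/((n+1) C(n,j))`
gives `(n+1) S(n+1) = 2^(n+1) ∑_j 1/C(n,j)`, and since `v₂(C(n,j)) ≤ ⌊log₂ n⌋` the sum `S N` is
highly divisible by `2` for odd `N`: `v₂(S(2n+3)) ≥ n+2`. So `v₂(S n)` is governed by the tail
`∑_{n<k≤2n+3} 2^k/k`, whose terms have valuation `k - v₂(k) ≥ k - ⌊log₂ k⌋ ≥ n+1 - ⌊log₂(n+1)⌋`.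
When `n+1 = 2^α` the term `k = n+1` is the only one attaining this bound, which gives equality;
conversely, equality forces `log₂(n+1)` to be an integer.
-/

open Finset

namespace padicValRat

variable {p : ℕ} [Fact p.Prime] {ι : Type*} {s : Finset ι} {f : ι → ℚ}

theorem le_sum_of_pos (hs : s.Nonempty) (hf : ∀ i ∈ s, 0 < f i) {v : ℤ}
    (hv : ∀ i ∈ s, v ≤ padicValRat p (f i)) : v ≤ padicValRat p (∑ i ∈ s, f i) := by
  induction hs using Finset.Nonempty.cons_induction with
  | singleton a => simpa using hv a (mem_singleton_self a)
  | cons a s ha hs ih =>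
    simp only [mem_cons, forall_eq_or_imp] at hf hv
    rw [sum_cons]
    have hsum : 0 < f a + ∑ i ∈ s, f i := add_pos hf.1 (sum_pos hf.2 hs)
    exact (le_min hv.1 (ih hf.2 hv.2)).trans (min_le_padicValRat_add hsum.ne')

theorem sum_eq_of_lt [DecidableEq ι] {a : ι} (ha : a ∈ s) (hf : ∀ i ∈ s, 0 < f i)
    (hv : ∀ i ∈ s, i ≠ a → padicValRat p (f a) < padicValRat p (f i)) :
    padicValRat p (∑ i ∈ s, f i) = padicValRat p (f a) := by
  rw [← add_sum_erase s f ha]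
  rcases (s.erase a).eq_empty_or_nonempty with h | h
  · simp [h]
  have hrest : padicValRat p (f a) < padicValRat p (∑ i ∈ s.erase a, f i) :=
    Int.lt_iff_add_one_le.mpr <| le_sum_of_pos h (fun i hi => hf i (mem_of_mem_erase hi))
      fun i hi => Int.lt_iff_add_one_le.mp (hv i (mem_of_mem_erase hi) (ne_of_mem_erase hi))
  have hpos : 0 < ∑ i ∈ s.erase a, f i := sum_pos (fun i hi => hf i (mem_of_mem_erase hi)) h
  exact add_eq_of_lt (add_pos (hf a ha) hpos).ne' (hf a ha).ne' hpos.ne' hrest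

end padicValRat

theorem Nat.log_add_one_le_log_add_one {b : ℕ} (hb : 1 < b) (n : ℕ) :
    Nat.log b (n + 1) ≤ Nat.log b n + 1 := by
  rcases Nat.eq_zero_or_pos n with rfl | hn
  · simp
  calc Nat.log b (n + 1) ≤ Nat.log b (n * b) := Nat.log_mono_right (by nlinarith)
    _ = Nat.log b n + 1 := Nat.log_mul_base hb hn.ne'

theorem monotone_sub_natLog {b : ℕ} (hb : 1 < b) : Monotone fun k : ℕ => (k : ℤ) - Nat.log b k :=
  monotone_nat_of_le_succ fun n => by
    have := Nat.log_add_one_le_log_add_one hb n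
    push_cast
    omega

theorem eq_pow_toNat_of_logb_eq_intCast {b m : ℕ} (hb : 1 < b) (hm : m ≠ 0) {z : ℤ}
    (h : Real.logb b m = z) : m = b ^ z.toNat := by
  have hz : 0 ≤ z := by
    have : 0 ≤ Real.logb b m :=
      Real.logb_nonneg (by exact_mod_cast hb) (by exact_mod_cast Nat.one_le_iff_ne_zero.mpr hm)
    exact_mod_cast h ▸ this
  have hpow := Real.rpow_logb (b := b) (x := m) (by positivity) (by exact_mod_cast hb.ne')
    (by positivity)
  rw [h, ← Int.toNat_of_nonneg hz, Int.cast_natCast, Real.rpow_natCast] at hpow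
  exact_mod_cast hpow.symm

theorem inv_choose_succ_add_inv_choose_succ_succ {n j : ℕ} (hj : j ≤ n) :
    (n + 1) * (((n + 1).choose j : ℚ)⁻¹ + ((n + 1).choose (j + 1) : ℚ)⁻¹)
      = (n + 2) * (n.choose j : ℚ)⁻¹ := by
  have hc : (n.choose j : ℚ) ≠ 0 := by exact_mod_cast (Nat.choose_pos hj).ne'
  have hnj : ((n + 1 - j : ℕ) : ℚ) ≠ 0 := by exact_mod_cast (by omega : n + 1 - j ≠ 0)
  have h₁ : ((n + 1).choose j : ℚ) = n.choose j * (n + 1) / (n + 1 - j : ℕ) := by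
    rw [eq_div_iff hnj]; exact_mod_cast (Nat.choose_mul_succ_eq n j).symm
  have h₂ : ((n + 1).choose (j + 1) : ℚ) = (n + 1) * n.choose j / (j + 1) := by
    rw [eq_div_iff (by positivity)]; exact_mod_cast (Nat.add_one_mul_choose_eq n j).symm
  rw [h₁, h₂, Nat.cast_sub (by omega)]
  rw [Nat.cast_sub (by omega)] at hnj
  field_simp
  push_cast
  ring

def invChooseSum (n : ℕ) : ℚ := ∑ j ∈ range (n + 1), (n.choose j : ℚ)⁻¹

def twoPowDivSum (n : ℕ) : ℚ := ∑ k ∈ Icc 1 n, (2 : ℚ) ^ k / k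

theorem invChooseSum_succ (n : ℕ) :
    2 * (n + 1) * (invChooseSum (n + 1) - 1) = (n + 2) * invChooseSum n := by
  have hlow : ∑ j ∈ range (n + 1), ((n + 1).choose j : ℚ)⁻¹ = invChooseSum (n + 1) - 1 := by
    rw [invChooseSum, sum_range_succ _ (n + 1), Nat.choose_self]; simp
  have hhigh : ∑ j ∈ range (n + 1), ((n + 1).choose (j + 1) : ℚ)⁻¹ = invChooseSum (n + 1) - 1 := by
    rw [invChooseSum, sum_range_succ' _ (n + 1)]; simp
  calc 2 * (n + 1) * (invChooseSum (n + 1) - 1)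
      = ∑ j ∈ range (n + 1),
          (n + 1) * (((n + 1).choose j : ℚ)⁻¹ + ((n + 1).choose (j + 1) : ℚ)⁻¹) := by
        rw [← mul_sum, sum_add_distrib, hlow, hhigh]; ring
    _ = ∑ j ∈ range (n + 1), (n + 2) * (n.choose j : ℚ)⁻¹ :=
        sum_congr rfl fun j hj =>
          inv_choose_succ_add_inv_choose_succ_succ (Nat.lt_succ_iff.mp (mem_range.mp hj))
    _ = (n + 2) * invChooseSum n := by rw [invChooseSum, mul_sum]

theorem invChooseSum_pos (n : ℕ) : 0 < invChooseSum n :=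
  sum_pos (fun j hj => by
    have := Nat.choose_pos (Nat.lt_succ_iff.mp (mem_range.mp hj))
    positivity) ⟨0, by simp⟩

theorem twoPowDivSum_succ (n : ℕ) :
    twoPowDivSum (n + 1) = twoPowDivSum n + 2 ^ (n + 1) / (n + 1) := by
  rw [twoPowDivSum, sum_Icc_succ_top (by omega), twoPowDivSum]
  push_cast
  rfl

theorem two_pow_div_pos {k : ℕ} (hk : k ≠ 0) : 0 < (2 : ℚ) ^ k / k := by positivity

theorem twoPowDivSum_pos {n : ℕ} (hn : n ≠ 0) : 0 < twoPowDivSum n :=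
  sum_pos (fun _ hk => two_pow_div_pos (ne_zero_of_lt (mem_Icc.mp hk).1))
    ⟨1, mem_Icc.mpr ⟨le_rfl, Nat.one_le_iff_ne_zero.mpr hn⟩⟩

theorem succ_mul_twoPowDivSum_succ (n : ℕ) :
    (n + 1) * twoPowDivSum (n + 1) = 2 ^ (n + 1) * invChooseSum n := by
  induction n with
  | zero => simp [twoPowDivSum, invChooseSum]
  | succ n ih =>
    have hS : twoPowDivSum (n + 1) = 2 ^ (n + 1) * invChooseSum n / (n + 1) := by
      rw [← ih]; field_simp
    rw [twoPowDivSum_succ, hS]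
    push_cast
    field_simp
    linear_combination -(2 : ℚ) ^ (n + 1) * invChooseSum_succ n

theorem neg_natLog_le_padicValRat_invChooseSum (p : ℕ) [Fact p.Prime] (n : ℕ) :
    -(Nat.log p n : ℤ) ≤ padicValRat p (invChooseSum n) := by
  refine padicValRat.le_sum_of_pos ⟨0, by simp⟩ (fun j hj => ?_) fun j _ => ?_
  · have := Nat.choose_pos (Nat.lt_succ_iff.mp (mem_range.mp hj))
    positivity
  · rw [padicValRat.inv, padicValRat.of_nat, neg_le_neg_iff, Nat.cast_le,
      ← Nat.factorization_def _ Fact.out]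
    exact Nat.factorization_choose_le_log

theorem padicValRat_two_pow_div {k : ℕ} (hk : k ≠ 0) :
    padicValRat 2 ((2 : ℚ) ^ k / k) = k - padicValNat 2 k := by
  have h2 : padicValRat 2 (2 : ℚ) = 1 := by exact_mod_cast padicValRat.self (p := 2) one_lt_two
  rw [padicValRat.div (by positivity) (by exact_mod_cast hk), padicValRat.pow, h2,
    padicValRat.of_nat, mul_one]

theorem sub_natLog_le_padicValRat_two_pow_div {k : ℕ} (hk : k ≠ 0) :
    (k : ℤ) - Nat.log 2 k ≤ padicValRat 2 ((2 : ℚ) ^ k / k) := by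
  have := padicValNat_le_nat_log (p := 2) k
  rw [padicValRat_two_pow_div hk]
  omega

theorem le_padicValRat_twoPowDivSum_succ (n : ℕ) :
    (n + 1 : ℤ) - padicValNat 2 (n + 1) - Nat.log 2 n ≤ padicValRat 2 (twoPowDivSum (n + 1)) := by
  have h := congrArg (padicValRat 2) (succ_mul_twoPowDivSum_succ n)
  have hS := twoPowDivSum_pos n.add_one_ne_zero
  have hc : 0 < invChooseSum n := invChooseSum_pos n
  have h2 : padicValRat 2 (2 : ℚ) = 1 := by exact_mod_cast padicValRat.self (p := 2) one_lt_two
  have hn : padicValRat 2 ((n : ℚ) + 1) = padicValNat 2 (n + 1) := by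
    exact_mod_cast padicValRat.of_nat
  rw [padicValRat.mul (by positivity) hS.ne', padicValRat.mul (by positivity) hc.ne',
    padicValRat.pow, h2, hn] at h
  have := neg_natLog_le_padicValRat_invChooseSum 2 n
  push_cast at h
  omega

theorem add_two_le_padicValRat_twoPowDivSum_two_mul_add_three (n : ℕ) :
    (n + 2 : ℤ) ≤ padicValRat 2 (twoPowDivSum (2 * n + 3)) := by
  have h : _ ≤ padicValRat 2 (twoPowDivSum (2 * n + 3)) :=
    le_padicValRat_twoPowDivSum_succ (2 * n + 2)
  have hodd : padicValNat 2 (2 * n + 2 + 1) = 0 :=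
    padicValNat.eq_zero_of_not_dvd (by omega)
  have hlog : Nat.log 2 (2 * n + 2) = Nat.log 2 (n + 1) + 1 := by
    rw [← Nat.log_mul_base one_lt_two n.add_one_ne_zero]; ring_nf
  have := Nat.log_lt_self 2 n.add_one_ne_zero
  rw [hodd, hlog] at h
  push_cast at h
  omega

theorem twoPowDivSum_add_sum_Ioc {n m : ℕ} (h : n ≤ m) :
    twoPowDivSum n + ∑ k ∈ Ioc n m, (2 : ℚ) ^ k / k = twoPowDivSum m := by
  rw [twoPowDivSum, twoPowDivSum, ← zero_add 1, Icc_add_one_left_eq_Ioc,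
    Icc_add_one_left_eq_Ioc, sum_Ioc_consecutive _ n.zero_le h]

theorem le_padicValRat_sum_Ioc {n m : ℕ} (h : n < m) :
    (n + 1 : ℤ) - Nat.log 2 (n + 1) ≤ padicValRat 2 (∑ k ∈ Ioc n m, (2 : ℚ) ^ k / k) := by
  refine padicValRat.le_sum_of_pos ⟨n + 1, mem_Ioc.mpr ⟨n.lt_add_one, h⟩⟩
    (fun _ hk => two_pow_div_pos (ne_zero_of_lt (mem_Ioc.mp hk).1)) fun k hk => ?_
  have hk := mem_Ioc.mp hk
  have := monotone_sub_natLog one_lt_two (show n + 1 ≤ k from hk.1)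
  have := sub_natLog_le_padicValRat_two_pow_div (ne_zero_of_lt hk.1)
  push_cast at *
  omega

theorem padicValRat_sum_Ioc_of_succ_eq_two_pow {n m α : ℕ} (hn : n ≠ 0) (h : n < m)
    (hα : n + 1 = 2 ^ α) :
    padicValRat 2 (∑ k ∈ Ioc n m, (2 : ℚ) ^ k / k) = n + 1 - α := by
  have hlog : Nat.log 2 (n + 2) ≤ α :=
    Nat.lt_succ_iff.mp <| Nat.log_lt_of_lt_pow (by omega) (by rw [pow_succ]; omega)
  have hv : padicValNat 2 (n + 1) = α := by rw [hα, padicValNat.prime_pow]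
  rw [padicValRat.sum_eq_of_lt (a := n + 1) (mem_Ioc.mpr ⟨n.lt_add_one, h⟩),
    padicValRat_two_pow_div n.add_one_ne_zero, hv]
  · push_cast; ring
  · exact fun _ hk => two_pow_div_pos (ne_zero_of_lt (mem_Ioc.mp hk).1)
  · intro k hk hne
    have hk := mem_Ioc.mp hk
    have := monotone_sub_natLog one_lt_two (show n + 2 ≤ k by omega)
    have := sub_natLog_le_padicValRat_two_pow_div (ne_zero_of_lt hk.1)
    rw [padicValRat_two_pow_div n.add_one_ne_zero, hv]
    push_cast at *
    omega

theorem twoPowDivSum_eq_neg_sum_Ioc_add (n : ℕ) :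
    twoPowDivSum n
      = -∑ k ∈ Ioc n (2 * n + 3), (2 : ℚ) ^ k / k + twoPowDivSum (2 * n + 3) := by
  rw [← twoPowDivSum_add_sum_Ioc (by omega : n ≤ 2 * n + 3)]
  ring

theorem le_padicValRat_twoPowDivSum {n : ℕ} (hn : n ≠ 0) :
    (n + 1 : ℤ) - Nat.log 2 (n + 1) ≤ padicValRat 2 (twoPowDivSum n) := by
  have hS := twoPowDivSum_pos hn
  rw [twoPowDivSum_eq_neg_sum_Ioc_add] at hS ⊢
  refine (le_min ?_ ?_).trans (padicValRat.min_le_padicValRat_add hS.ne')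
  · rw [padicValRat.neg]
    exact le_padicValRat_sum_Ioc (by omega)
  · have := add_two_le_padicValRat_twoPowDivSum_two_mul_add_three n
    omega

theorem padicValRat_twoPowDivSum_of_succ_eq_two_pow {n α : ℕ} (hn : n ≠ 0)
    (hα : n + 1 = 2 ^ α) : padicValRat 2 (twoPowDivSum n) = n + 1 - α := by
  have hhead := add_two_le_padicValRat_twoPowDivSum_two_mul_add_three n
  have htail := padicValRat_sum_Ioc_of_succ_eq_two_pow hn (by omega : n < 2 * n + 3) hα
  have htail_pos : 0 < ∑ k ∈ Ioc n (2 * n + 3), (2 : ℚ) ^ k / k :=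
    sum_pos (fun _ hk => two_pow_div_pos (ne_zero_of_lt (mem_Ioc.mp hk).1))
      ⟨n + 1, mem_Ioc.mpr ⟨n.lt_add_one, by omega⟩⟩
  have hS := twoPowDivSum_pos hn
  rw [twoPowDivSum_eq_neg_sum_Ioc_add] at hS ⊢
  rw [padicValRat.add_eq_of_lt hS.ne' (neg_ne_zero.mpr htail_pos.ne')
    (twoPowDivSum_pos (by omega)).ne', padicValRat.neg, htail]
  rw [padicValRat.neg, htail]
  omega

/-- Dubickas' theorem: `v_2(Σ_{k=1}^n 2^k/k) ≥ (n+1) - log_2(n+1)`, with equality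
iff `n = 2^α - 1` for some positive integer `α`. -/
theorem stmt18 (n : ℕ) (hn : 1 ≤ n) :
    ((n : ℝ) + 1) - Real.logb 2 ((n : ℝ) + 1) ≤
      (padicValRat 2 (∑ k ∈ Finset.Icc 1 n, (2 : ℚ) ^ k / (k : ℚ)) : ℝ) ∧
    ((padicValRat 2 (∑ k ∈ Finset.Icc 1 n, (2 : ℚ) ^ k / (k : ℚ)) : ℝ) =
        ((n : ℝ) + 1) - Real.logb 2 ((n : ℝ) + 1) ↔
      ∃ α : ℕ, 1 ≤ α ∧ n = 2 ^ α - 1) := by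
  have hn0 : n ≠ 0 := by omega
  rw [← twoPowDivSum.eq_1]
  have hv : (n + 1 : ℝ) - Nat.log 2 (n + 1) ≤ padicValRat 2 (twoPowDivSum n) := by
    exact_mod_cast le_padicValRat_twoPowDivSum hn0
  have hlog : (Nat.log 2 (n + 1) : ℝ) ≤ Real.logb 2 (n + 1) := by
    exact_mod_cast Real.natLog_le_logb (n + 1) 2
  refine ⟨by linarith, fun heq => ?_, ?_⟩
  · have hpow := eq_pow_toNat_of_logb_eq_intCast one_lt_two n.add_one_ne_zero
      (z := n + 1 - padicValRat 2 (twoPowDivSum n)) (by push_cast; linarith)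
    refine ⟨_, Nat.one_le_iff_ne_zero.mpr fun h0 => ?_, Nat.eq_sub_of_add_eq hpow⟩
    rw [h0, pow_zero] at hpow
    omega
  · rintro ⟨α, -, rfl⟩
    have hα : 2 ^ α - 1 + 1 = 2 ^ α := Nat.sub_add_cancel Nat.one_le_two_pow
    rw [padicValRat_twoPowDivSum_of_succ_eq_two_pow (by omega) hα]
    have hcast : ((2 ^ α - 1 : ℕ) : ℝ) + 1 = 2 ^ α := by exact_mod_cast hα
    rw [hcast, Real.logb_pow, Real.logb_self_eq_one one_lt_two]
    push_cast
    linarith
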